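/- arXiv:1810.01045 — 2 statements merged into one kernel-verified Lean document; each statement's English description precedes it below -/
import Mathlib

section
/- Let ρ be a positive semidefinite trace-class operator (density matrix) on a complex Hilbert space K, and let J be an antiunitary on K with J^2 = -I and JρJ^* = ρ. Then every eigenvalue of ρ has even multiplicity, and consequently the von Neumann entropy S(ρ) = -Tr(ρ log ρ) satisfies S(ρ) ≥ log 2 whenever ρ ≠ 0 and Tr(ρ) = 1. -/
open Module Module.End Finset
open scoped InnerProductSpace

/-!
If `J` is antiunitary with `J² = -1`, then `⟪u, J u⟫ = ⟪J (J u), J u⟫ = -⟪u, J u⟫` vanishes,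
so for `u ≠ 0` the vectors `u, J u` span a `J`-invariant plane. Orthogonal complements of
`J`-invariant subspaces are `J`-invariant, so a `J`-invariant subspace splits off such planes
until nothing is left: it is even-dimensional. The eigenspaces of `ρ` are `J`-invariant because
the eigenvalues are real, so each eigenvalue of a density matrix occurs at least twice and is
therefore at most `1/2`; finally `S(ρ) ≥ -log λ_max ≥ log 2`.
-/

theorem le_half_of_two_le_card_filter_eq {ι : Type*} [Fintype ι] {p : ι → ℝ}
    (hp : ∀ i, 0 ≤ p i) (hsum : ∑ i, p i = 1) {i : ι} (hi : 2 ≤ #{j | p j = p i}) :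
    p i ≤ 1 / 2 := by
  have : 2 * p i ≤ 1 :=
    calc 2 * p i ≤ #{j | p j = p i} • p i := by
          rw [nsmul_eq_mul]; gcongr; exacts [hp i, by exact_mod_cast hi]
      _ ≤ ∑ j ∈ {j | p j = p i}, p j :=
          card_nsmul_le_sum _ _ _ fun j hj => (mem_filter.1 hj).2.ge
      _ ≤ ∑ j, p j := sum_le_univ_sum_of_nonneg hp
      _ = 1 := hsum
  linarith

theorem neg_log_le_neg_sum_mul_log {ι : Type*} [Fintype ι] {p : ι → ℝ}
    (hp : ∀ i, 0 ≤ p i) (hsum : ∑ i, p i = 1) {M : ℝ} (hM : ∀ i, p i ≤ M) :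
    -Real.log M ≤ -∑ i, p i * Real.log (p i) := by
  have hterm (i : ι) : p i * Real.log (p i) ≤ p i * Real.log M := by
    rcases (hp i).eq_or_lt with h | h
    · simp [← h]
    · exact mul_le_mul_of_nonneg_left (Real.log_le_log h (hM i)) h.le
  calc -Real.log M = -∑ i, p i * Real.log M := by rw [← sum_mul, hsum, one_mul]
    _ ≤ -∑ i, p i * Real.log (p i) := neg_le_neg (sum_le_sum fun i _ => hterm i)

namespace LinearMap

section Antiunitary

variable {K : Type*} [NormedAddCommGroup K] [InnerProductSpace ℂ K] (J : K →ₗ⋆[ℂ] K)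

theorem inner_apply_self_eq_zero (hinner : ∀ x y, ⟪J x, J y⟫_ℂ = ⟪y, x⟫_ℂ)
    (hJ2 : ∀ x, J (J x) = -x) (x : K) : ⟪J x, x⟫_ℂ = 0 := by
  have h := hinner x (J x)
  rw [hJ2, inner_neg_right] at h
  linear_combination -h / 2

theorem orthogonal_le_comap_orthogonal (hinner : ∀ x y, ⟪J x, J y⟫_ℂ = ⟪y, x⟫_ℂ)
    (hJ2 : ∀ x, J (J x) = -x) {F : Submodule ℂ K} (hF : F ≤ F.comap J) :
    Fᗮ ≤ Fᗮ.comap J := by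
  intro v hv w hw
  have h := hinner (J w) v
  rw [hJ2, inner_neg_left, (Submodule.mem_orthogonal' _ _).1 hv _ (hF hw)] at h
  exact neg_eq_zero.1 h

theorem span_pair_le_comap (hJ2 : ∀ x, J (J x) = -x) (u : K) :
    Submodule.span ℂ {u, J u} ≤ (Submodule.span ℂ {u, J u}).comap J := by
  rw [Submodule.span_le, Set.insert_subset_iff, Set.singleton_subset_iff]
  refine ⟨Submodule.subset_span (by simp), ?_⟩
  simp only [SetLike.mem_coe, Submodule.mem_comap, hJ2]
  exact Submodule.neg_mem _ (Submodule.subset_span (by simp))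

theorem finrank_span_pair_eq_two (hinner : ∀ x y, ⟪J x, J y⟫_ℂ = ⟪y, x⟫_ℂ)
    (hJ2 : ∀ x, J (J x) = -x) {u : K} (hu : u ≠ 0) :
    finrank ℂ (Submodule.span ℂ {u, J u}) = 2 := by
  have hJu : J u ≠ 0 := by
    intro h
    have := hinner u u
    rw [h, inner_zero_left, eq_comm, inner_self_eq_zero] at this
    exact hu this
  have hind : LinearIndependent ℂ ![u, J u] := by
    have horth := inner_apply_self_eq_zero J hinner hJ2 u
    refine linearIndependent_of_ne_zero_of_inner_eq_zero ?_ ?_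
    · simp [Fin.forall_fin_two, hu, hJu]
    · simp [Pairwise, Fin.forall_fin_two, horth, inner_eq_zero_symm.1 horth]
  rw [← Matrix.range_cons_cons_empty u (J u) ![], finrank_span_eq_card hind, Fintype.card_fin]

theorem even_finrank_of_le_comap (hinner : ∀ x y, ⟪J x, J y⟫_ℂ = ⟪y, x⟫_ℂ)
    (hJ2 : ∀ x, J (J x) = -x) [FiniteDimensional ℂ K] (E : Submodule ℂ K)
    (hE : E ≤ E.comap J) :
    Even (finrank ℂ E) := by
  induction hd : finrank ℂ E using Nat.strong_induction_on generalizing E with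
  | _ m ih =>
  rcases eq_or_ne E ⊥ with hbot | hne
  · rw [← hd, hbot, finrank_bot]
    exact Even.zero
  obtain ⟨u, huE, hu⟩ := Submodule.exists_mem_ne_zero_of_ne_bot hne
  set F := Submodule.span ℂ {u, J u}
  have hFE : F ≤ E := Submodule.span_le.2 (Set.insert_subset huE (by simpa using hE huE))
  have hF : F ≤ F.comap J := span_pair_le_comap J hJ2 u
  have hsplit := Submodule.finrank_add_inf_finrank_orthogonal hFE
  rw [finrank_span_pair_eq_two J hinner hJ2 hu, hd] at hsplit
  have hE' : Fᗮ ⊓ E ≤ (Fᗮ ⊓ E).comap J := by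
    rw [Submodule.comap_inf]
    exact inf_le_inf (orthogonal_le_comap_orthogonal J hinner hJ2 hF) hE
  obtain ⟨k, hk⟩ := ih _ (by omega) _ hE' rfl
  exact ⟨k + 1, by omega⟩

end Antiunitary

theorem IsSymmetric.eigenspace_le_comap {K : Type*} [NormedAddCommGroup K]
    [InnerProductSpace ℂ K] {ρ : K →ₗ[ℂ] K} (hρ : ρ.IsSymmetric) {J : K →ₗ⋆[ℂ] K}
    (hcomm : ∀ x, J (ρ x) = ρ (J x)) (μ : ℂ) :
    eigenspace ρ μ ≤ (eigenspace ρ μ).comap J := by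
  intro x hx
  rcases eq_or_ne x 0 with rfl | hx0
  · simp
  have hμ : starRingEnd ℂ μ = μ :=
    hρ.conj_eigenvalue_eq_self (hasEigenvalue_of_hasEigenvector ⟨hx, hx0⟩)
  rw [mem_eigenspace_iff] at hx
  rw [Submodule.mem_comap, mem_eigenspace_iff, ← hcomm, hx, map_smulₛₗ, hμ]

theorem IsSymmetric.two_le_card_filter_eigenvalues_eq {𝕜 E : Type*} [RCLike 𝕜]
    [NormedAddCommGroup E] [InnerProductSpace 𝕜 E] [FiniteDimensional 𝕜 E]
    {T : E →ₗ[𝕜] E} (hT : T.IsSymmetric) {n : ℕ} (hn : finrank 𝕜 E = n)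
    (heven : ∀ μ : 𝕜, Even (finrank 𝕜 (eigenspace T μ))) (i : Fin n) :
    2 ≤ #{j | hT.eigenvalues hn j = hT.eigenvalues hn i} := by
  have hcard := hT.card_filter_eigenvalues_eq hn (hT.eigenvalues hn i)
  simp only [RCLike.ofReal_inj] at hcard
  have hpos : finrank 𝕜 (eigenspace T (hT.eigenvalues hn i)) ≠ 0 :=
    Submodule.finrank_eq_zero.not.2 (hT.hasEigenvalue_eigenvalues hn i)
  obtain ⟨k, hk⟩ := heven (hT.eigenvalues hn i)
  omega

end LinearMap

theorem density_matrix_time_reversal_entropy_general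
    {K : Type*} [NormedAddCommGroup K] [InnerProductSpace ℂ K] [FiniteDimensional ℂ K]
    {n : ℕ} (hn : Module.finrank ℂ K = n)
    (ρ : K →ₗ[ℂ] K) (hsym : ρ.IsSymmetric)
    (hpos : ∀ x, 0 ≤ (inner ℂ (ρ x) x : ℂ).re)
    (J : K → K)
    (hadd : ∀ x y, J (x + y) = J x + J y)
    (hsmul : ∀ (a : ℂ) (x : K), J (a • x) = (starRingEnd ℂ a) • J x)
    (hinner : ∀ x y, (inner ℂ (J x) (J y) : ℂ) = (inner ℂ y x : ℂ))
    (hJ2 : ∀ x, J (J x) = -x)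
    (hcomm : ∀ x, J (ρ x) = ρ (J x)) :
    (∀ μ : ℂ, Even (Module.finrank ℂ (Module.End.eigenspace (ρ : Module.End ℂ K) μ))) ∧
    (ρ ≠ 0 → LinearMap.trace ℂ K ρ = 1 →
      Real.log 2 ≤ - ∑ i : Fin n, hsym.eigenvalues hn i * Real.log (hsym.eigenvalues hn i)) := by
  let J' : K →ₗ⋆[ℂ] K := { toFun := J, map_add' := hadd, map_smul' := hsmul }
  have heven (μ : ℂ) : Even (finrank ℂ (eigenspace ρ μ)) :=
    J'.even_finrank_of_le_comap hinner hJ2 _ (hsym.eigenspace_le_comap (J := J') hcomm μ)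
  refine ⟨heven, fun _ htr => ?_⟩
  have hsum : ∑ i, hsym.eigenvalues hn i = 1 := by
    rw [← hsym.re_trace_eq_sum_eigenvalues hn, htr, RCLike.one_re]
  have hnonneg := LinearMap.IsPositive.nonneg_eigenvalues ⟨hsym, hpos⟩ hn
  have hhalf (i : Fin n) : hsym.eigenvalues hn i ≤ 1 / 2 :=
    le_half_of_two_le_card_filter_eq hnonneg hsum
      (hsym.two_le_card_filter_eigenvalues_eq hn heven i)
  simpa using neg_log_le_neg_sum_mul_log hnonneg hsum hhalf

/-- Let `ρ` be a density matrix on a (finite-dimensional) complex Hilbert space `K`,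
and `J` an antiunitary with `J² = -1` commuting with `ρ` (i.e. `JρJ* = ρ`).  Then every
eigenvalue of `ρ` has even multiplicity, and consequently the von Neumann entropy
`S(ρ) = -Tr(ρ log ρ) = -∑ λᵢ log λᵢ` is at least `log 2` whenever `ρ ≠ 0` and `Tr ρ = 1`. -/
theorem density_matrix_time_reversal_entropy
    {K : Type*} [NormedAddCommGroup K] [InnerProductSpace ℂ K] [FiniteDimensional ℂ K]
    {n : ℕ} (hn : Module.finrank ℂ K = n)
    (ρ : K →ₗ[ℂ] K) (hsym : ρ.IsSymmetric)
    (hpos : ∀ x, 0 ≤ (inner ℂ (ρ x) x : ℂ).re)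
    (J : K → K)
    (hadd : ∀ x y, J (x + y) = J x + J y)
    (hsmul : ∀ (a : ℂ) (x : K), J (a • x) = (starRingEnd ℂ a) • J x)
    (hinner : ∀ x y, (inner ℂ (J x) (J y) : ℂ) = (inner ℂ y x : ℂ))
    (hsurj : Function.Surjective J)
    (hJ2 : ∀ x, J (J x) = -x)
    (hcomm : ∀ x, J (ρ x) = ρ (J x)) :
    (∀ μ : ℂ, Even (Module.finrank ℂ (Module.End.eigenspace (ρ : Module.End ℂ K) μ))) ∧
    (ρ ≠ 0 → LinearMap.trace ℂ K ρ = 1 →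
      Real.log 2 ≤ - ∑ i : Fin n, hsym.eigenvalues hn i * Real.log (hsym.eigenvalues hn i)) :=
  density_matrix_time_reversal_entropy_general hn ρ hsym hpos J hadd hsmul hinner hJ2 hcomm
end

section
/- Let K be a finite-dimensional complex Hilbert space and V a unitary on K. Suppose that for some family of operators (v_μ)_{μ} on K spanning all of B(K) under products of some fixed length (i.e., there exist coefficients c with Σ c_{μ₁…μ_l} v_{μ₁}⋯v_{μ_l} = 1) and some ω ∈ ℂ with |ω| = 1, we have ω V v_μ V^* = v_μ for all μ. Then ω = 1, and V commutes with each v_μ. -/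
/-!
Conjugation `f = V · V*` is an algebra automorphism, and the relation says `ω • f (v μ) = v μ`.
Hence `ω ^ l • f` fixes every product of `l` generators; since these span, `ω ^ l • f = id`.
Evaluating at `1` gives `ω ^ l = 1`, so `f = id`, i.e. `V` is central. The relation then reads
`ω • v μ = v μ`, and some `v μ` is nonzero because products of zeros cannot span.
-/

open Submodule

theorem List.prod_map_const_smul {M N : Type*} [Monoid M] [Monoid N] [MulAction M N]
    [IsScalarTower M N N] [SMulCommClass M N N] (c : M) (L : List N) :
    (L.map (c • ·)).prod = c ^ L.length • L.prod := by
  induction L with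
  | nil => simp
  | cons a L ih =>
    rw [List.map_cons, List.prod_cons, ih, List.prod_cons, smul_mul_smul_comm, ← pow_succ',
      List.length_cons]

section WordProducts

variable {S A : Type*}

def wordProducts [Monoid A] (v : S → A) (l : ℕ) : Set A :=
  {a | ∃ μs : Fin l → S, a = (List.ofFn fun i => v (μs i)).prod}

theorem pow_smul_map_of_mem_wordProducts {M F : Type*} [Monoid M] [Monoid A] [MulAction M A]
    [IsScalarTower M A A] [SMulCommClass M A A] [FunLike F A A] [MonoidHomClass F A A]
    (f : F) {v : S → A} {c : M} (hf : ∀ μ, c • f (v μ) = v μ) {l : ℕ} {a : A}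
    (ha : a ∈ wordProducts v l) : c ^ l • f a = a := by
  obtain ⟨μs, rfl⟩ := ha
  have hsmul := List.prod_map_const_smul c (List.ofFn fun i => f (v (μs i)))
  rw [List.map_ofFn, List.length_ofFn] at hsmul
  simp only [Function.comp_def, hf] at hsmul
  rw [map_list_prod, List.map_ofFn, Function.comp_def, ← hsmul]

theorem exists_ne_zero_of_span_wordProducts_eq_top {K : Type*} [Semiring K] [Semiring A]
    [Module K A] [Nontrivial A] {v : S → A} {l : ℕ} (hl : 0 < l)
    (hspan : span K (wordProducts v l) = ⊤) : ∃ μ, v μ ≠ 0 := by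
  by_contra! hv
  have hwords : wordProducts v l ⊆ {0} := by
    rintro _ ⟨μs, rfl⟩
    exact List.prod_eq_zero (List.mem_ofFn.mpr ⟨⟨0, hl⟩, hv _⟩)
  have hbot : span K (wordProducts v l) = ⊥ := by
    rw [eq_bot_iff, ← span_zero_singleton K]
    exact span_mono hwords
  exact top_ne_bot (hspan.symm.trans hbot)

theorem eq_one_and_map_eq_self_of_smul_map_eq {K F : Type*} [Field K] [Ring A] [Algebra K A]
    [Nontrivial A] [FunLike F A A] [AlgHomClass F K A A] (f : F) {v : S → A} {l : ℕ}
    (hl : 0 < l) (hspan : span K (wordProducts v l) = ⊤) {c : K}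
    (hf : ∀ μ, c • f (v μ) = v μ) : c = 1 ∧ ∀ a, f a = a := by
  have hlin : c ^ l • (AlgHomClass.toAlgHom f).toLinearMap = LinearMap.id :=
    LinearMap.ext_on hspan fun a ha => pow_smul_map_of_mem_wordProducts f hf ha
  have hsmul_map a : c ^ l • f a = a := LinearMap.congr_fun hlin a
  have hpow : c ^ l = 1 := by
    have h1 := hsmul_map 1
    rw [map_one, ← Algebra.algebraMap_eq_smul_one] at h1
    exact (algebraMap K A).injective (h1.trans (map_one _).symm)
  have hfix a : f a = a := by simpa [hpow] using hsmul_map a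
  obtain ⟨μ, hμ⟩ := exists_ne_zero_of_span_wordProducts_eq_top hl hspan
  refine ⟨smul_left_injective K hμ ?_, hfix⟩
  simpa [hfix] using hf μ

end WordProducts

theorem unitary_phase_intertwiner_trivial_general
    {k : ℕ} (hk : 0 < k) {S : Type*}
    (v : S → Matrix (Fin k) (Fin k) ℂ)
    {l : ℕ} (hl : 0 < l)
    (hspan : Submodule.span ℂ
      {A : Matrix (Fin k) (Fin k) ℂ | ∃ μs : Fin l → S, A = (List.ofFn fun i => v (μs i)).prod}
      = ⊤)
    (V : Matrix (Fin k) (Fin k) ℂ) (hV : V ∈ Matrix.unitaryGroup (Fin k) ℂ)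
    (ω : ℂ)
    (hrel : ∀ μ, ω • (V * v μ * star V) = v μ) :
    ω = 1 ∧ ∀ μ, V * v μ = v μ * V := by
  have : Nonempty (Fin k) := ⟨⟨0, hk⟩⟩
  obtain ⟨hω, hconj⟩ := eq_one_and_map_eq_self_of_smul_map_eq
    (Unitary.conjStarAlgAut ℂ _ ⟨V, hV⟩) (v := v) hl hspan hrel
  exact ⟨hω, fun μ => ((commute_unitary_iff_star_right_conjugate hV).mpr (hconj (v μ))).eq⟩

/-- Let `(v μ)` be a family of `k × k` matrices whose products of a fixed length `l`
span `M_k(ℂ)` (so that in particular `1` is a linear combination of such products).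
If a unitary `V` satisfies `ω • V vμ V* = vμ` for all `μ` with `|ω| = 1`, then `ω = 1`
and `V` commutes with each `vμ`. -/
theorem unitary_phase_intertwiner_trivial
    {k : ℕ} (hk : 0 < k) {S : Type*} [Fintype S]
    (v : S → Matrix (Fin k) (Fin k) ℂ)
    {l : ℕ} (hl : 0 < l)
    (hspan : Submodule.span ℂ
      {A : Matrix (Fin k) (Fin k) ℂ | ∃ μs : Fin l → S, A = (List.ofFn fun i => v (μs i)).prod}
      = ⊤)
    (hone : ∃ c : (Fin l → S) → ℂ,
      ∑ μs : Fin l → S, c μs • (List.ofFn fun i => v (μs i)).prod = 1)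
    (V : Matrix (Fin k) (Fin k) ℂ) (hV : V ∈ Matrix.unitaryGroup (Fin k) ℂ)
    (ω : ℂ) (hω : ‖ω‖ = 1)
    (hrel : ∀ μ, ω • (V * v μ * star V) = v μ) :
    ω = 1 ∧ ∀ μ, V * v μ = v μ * V :=
  unitary_phase_intertwiner_trivial_general hk v hl hspan V hV ω hrel
end
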